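/- Let a_m = u^{τ₂(m-1)} with u an indeterminate, and let H(n,l) = (a_{n+i+j})_{0≤i,j≤l}. If both n and l are even (n ≥ 2), then |det H(n,l)| = |u| · |det H(n/2, l/2)| · |det H̃(n/2 + 1, l/2 - 1)|, where H̃(m,k) := (a_{m+1+i+j} - u²·a_{m+i+j})_{0≤i,j≤k}. -/

import Mathlib

open Polynomial

/-- binary digit sum -/
def tau2 (n : ℕ) : ℕ := (Nat.digits 2 n).sum

/-- the `k × k` Hankel matrix `H(n, k-1)` with entries `a_{n+i+j} = u^{τ₂(n+i+j-1)}` -/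
noncomputable def hank (n k : ℕ) : Matrix (Fin k) (Fin k) (Polynomial ℚ) :=
  fun i j => X ^ tau2 (n + i + j - 1)

/-- the `k × k` matrix `H̃(m, k-1)` with entries `a_{m+1+i+j} - u²·a_{m+i+j}` -/
noncomputable def hankT (m k : ℕ) : Matrix (Fin k) (Fin k) (Polynomial ℚ) :=
  fun i j => X ^ tau2 (m + 1 + i + j - 1) - X ^ 2 * X ^ tau2 (m + i + j - 1)

/-!
With `a (2k+1) = a (k+1)` and `a (2k+2) = u * a (2k+1)`, order the columns of `H(2m+2, 2s)` as
evens then odds, and its rows as `0, 1, 3, …, 2s-1` then `2, 4, …, 2s`. On the even columns,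
row `2p+2` is `u` times row `2p+1`; subtracting that multiple makes the matrix block upper
triangular, with diagonal blocks `H(m+1, s)` (first row scaled by `u`) and `H̃(m+2, s-1)`.
The two reorderings only cost a sign.
-/

namespace Matrix

variable {m n R : Type*} [Fintype m] [Fintype n] [DecidableEq m] [DecidableEq n] [CommRing R]

theorem det_eq_det_submatrix_or_eq_neg (e₁ e₂ : n ≃ m) (A : Matrix m m R) :
    A.det = (A.submatrix e₁ e₂).det ∨ A.det = -(A.submatrix e₁ e₂).det := by
  have hA : A.submatrix e₁ e₂ = (A.submatrix id (e₁.symm.trans e₂)).submatrix e₁ e₁ := by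
    ext; simp
  rw [hA, det_submatrix_equiv_self, det_permute']
  rcases Int.units_eq_one_or (Equiv.Perm.sign (e₁.symm.trans e₂)) with h | h <;> simp [h]

theorem det_fromBlocks_mul₂₁ (A : Matrix m m R) (B : Matrix m n R) (F : Matrix n m R)
    (D : Matrix n n R) : (fromBlocks A B (F * A) D).det = A.det * (D - F * B).det := by
  have h : fromBlocks A B (F * A) D = fromBlocks 1 0 F 1 * fromBlocks A B 0 (D - F * B) := by
    simp [fromBlocks_multiply]
  rw [h, det_mul, det_fromBlocks_zero₁₂, det_fromBlocks_zero₂₁]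
  simp

end Matrix

noncomputable def Fin.evenOddEquiv (s : ℕ) : Fin (s + 1) ⊕ Fin s ≃ Fin (2 * s + 1) :=
  Equiv.ofBijective (Sum.elim (fun q => ⟨2 * q, by omega⟩) (fun q => ⟨2 * q + 1, by omega⟩)) <|
    (Fintype.bijective_iff_injective_and_card _).2
      ⟨by rintro (i | i) (j | j) h <;> simp [Fin.ext_iff] at h ⊢ <;> omega, by simp; ring⟩

noncomputable def Fin.zeroOddEvenEquiv (s : ℕ) : Fin (s + 1) ⊕ Fin s ≃ Fin (2 * s + 1) :=
  Equiv.ofBijective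
    (Sum.elim (Fin.cases 0 fun p => ⟨2 * p + 1, by omega⟩) (fun p => ⟨2 * p + 2, by omega⟩)) <|
    (Fintype.bijective_iff_injective_and_card _).2
      ⟨by
        rintro (⟨_ | i, hi⟩ | i) (⟨_ | j, hj⟩ | j) h <;> simp [Fin.ext_iff] at h ⊢ <;> omega,
        by simp; ring⟩

@[simp] theorem Fin.evenOddEquiv_inl (s : ℕ) (q : Fin (s + 1)) :
    (evenOddEquiv s (.inl q) : ℕ) = 2 * q := rfl

@[simp] theorem Fin.evenOddEquiv_inr (s : ℕ) (q : Fin s) :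
    (evenOddEquiv s (.inr q) : ℕ) = 2 * q + 1 := rfl

@[simp] theorem Fin.zeroOddEvenEquiv_inl_zero (s : ℕ) :
    (zeroOddEvenEquiv s (.inl 0) : ℕ) = 0 := rfl

@[simp] theorem Fin.zeroOddEvenEquiv_inl_succ (s : ℕ) (p : Fin s) :
    (zeroOddEvenEquiv s (.inl p.succ) : ℕ) = 2 * p + 1 := rfl

@[simp] theorem Fin.zeroOddEvenEquiv_inr (s : ℕ) (p : Fin s) :
    (zeroOddEvenEquiv s (.inr p) : ℕ) = 2 * p + 2 := rfl

namespace Matrix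

variable {R : Type*}

def hankel (a : ℕ → R) (n k : ℕ) : Matrix (Fin k) (Fin k) R :=
  of fun i j => a (n + i + j)

@[simp] theorem hankel_apply (a : ℕ → R) (n k : ℕ) (i j : Fin k) :
    hankel a n k i j = a (n + i + j) := rfl

noncomputable def hankelByParity (a : ℕ → R) (n s : ℕ) :
    Matrix (Fin (s + 1) ⊕ Fin s) (Fin (s + 1) ⊕ Fin s) R :=
  (hankel a n (2 * s + 1)).submatrix (Fin.zeroOddEvenEquiv s) (Fin.evenOddEquiv s)

variable [CommRing R] {a : ℕ → R} {u : R} (m s : ℕ)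

theorem toBlocks₁₁_hankelByParity (hodd : ∀ k, a (2 * k + 1) = a (k + 1))
    (heven : ∀ k, a (2 * k + 2) = u * a (2 * k + 1)) :
    (hankelByParity a (2 * m + 2) s).toBlocks₁₁ =
      (hankel a (m + 1) (s + 1)).updateRow 0 (u • hankel a (m + 1) (s + 1) 0) := by
  ext p q
  cases p using Fin.cases with
  | zero =>
    simp only [hankelByParity, toBlocks₁₁, submatrix_apply, hankel_apply, of_apply,
      updateRow_self, Fin.evenOddEquiv_inl, Fin.zeroOddEvenEquiv_inl_zero, Fin.val_zero,
      Pi.smul_apply, smul_eq_mul, add_zero]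
    rw [show 2 * m + 2 + 2 * (q : ℕ) = 2 * (m + q) + 2 by ring, heven, hodd, add_right_comm]
  | succ p =>
    simp only [hankelByParity, toBlocks₁₁, submatrix_apply, hankel_apply, of_apply,
      updateRow_ne (Fin.succ_ne_zero p), Fin.evenOddEquiv_inl, Fin.zeroOddEvenEquiv_inl_succ,
      Fin.val_succ]
    rw [show 2 * m + 2 + (2 * (p : ℕ) + 1) + 2 * q = 2 * (m + p + q + 1) + 1 by ring, hodd]
    ring_nf

theorem toBlocks₂₁_hankelByParity (heven : ∀ k, a (2 * k + 2) = u * a (2 * k + 1)) :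
    (hankelByParity a (2 * m + 2) s).toBlocks₂₁ =
      (u • (1 : Matrix (Fin (s + 1)) (Fin (s + 1)) R).submatrix Fin.succ (Equiv.refl _)) *
        (hankelByParity a (2 * m + 2) s).toBlocks₁₁ := by
  rw [smul_mul, one_submatrix_mul]
  ext p q
  simp only [hankelByParity, toBlocks₁₁, toBlocks₂₁, submatrix_apply, hankel_apply, of_apply,
    smul_apply, Fin.evenOddEquiv_inl, Fin.zeroOddEvenEquiv_inl_succ, Fin.zeroOddEvenEquiv_inr,
    Equiv.coe_refl, Equiv.refl_symm, Function.id_comp, id_eq, smul_eq_mul]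
  rw [show 2 * m + 2 + (2 * (p : ℕ) + 2) + 2 * q = 2 * (m + p + q + 1) + 2 by ring, heven]
  ring_nf

theorem toBlocks₂₂_sub_hankelByParity (hodd : ∀ k, a (2 * k + 1) = a (k + 1))
    (heven : ∀ k, a (2 * k + 2) = u * a (2 * k + 1)) :
    (hankelByParity a (2 * m + 2) s).toBlocks₂₂ -
        (u • (1 : Matrix (Fin (s + 1)) (Fin (s + 1)) R).submatrix Fin.succ (Equiv.refl _)) *
          (hankelByParity a (2 * m + 2) s).toBlocks₁₂ =
      hankel (fun t => a (t + 1) - u ^ 2 * a t) (m + 2) s := by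
  rw [smul_mul, one_submatrix_mul]
  ext p q
  simp only [hankelByParity, toBlocks₁₂, toBlocks₂₂, submatrix_apply, hankel_apply, of_apply,
    smul_apply, sub_apply, Fin.evenOddEquiv_inr, Fin.zeroOddEvenEquiv_inl_succ,
    Fin.zeroOddEvenEquiv_inr, Equiv.coe_refl, Equiv.refl_symm, Function.id_comp, id_eq,
    smul_eq_mul]
  rw [show 2 * m + 2 + (2 * (p : ℕ) + 2) + (2 * q + 1) = 2 * (m + p + q + 2) + 1 by ring,
    show 2 * m + 2 + (2 * (p : ℕ) + 1) + (2 * q + 1) = 2 * (m + p + q + 1) + 2 by ring,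
    hodd, heven, hodd]
  ring_nf

theorem det_hankel_two_mul_add_two (hodd : ∀ k, a (2 * k + 1) = a (k + 1))
    (heven : ∀ k, a (2 * k + 2) = u * a (2 * k + 1)) :
    (hankel a (2 * m + 2) (2 * s + 1)).det = u * (hankel a (m + 1) (s + 1)).det *
        (hankel (fun t => a (t + 1) - u ^ 2 * a t) (m + 2) s).det ∨
    (hankel a (2 * m + 2) (2 * s + 1)).det = -(u * (hankel a (m + 1) (s + 1)).det *
        (hankel (fun t => a (t + 1) - u ^ 2 * a t) (m + 2) s).det) := by
  have hsplit : (hankelByParity a (2 * m + 2) s).det = u * (hankel a (m + 1) (s + 1)).det *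
      (hankel (fun t => a (t + 1) - u ^ 2 * a t) (m + 2) s).det := by
    rw [← fromBlocks_toBlocks (hankelByParity a (2 * m + 2) s),
      toBlocks₂₁_hankelByParity m s heven, det_fromBlocks_mul₂₁,
      toBlocks₂₂_sub_hankelByParity m s hodd heven, toBlocks₁₁_hankelByParity m s hodd heven,
      det_updateRow_smul, updateRow_eq_self]
  rw [← hsplit]
  exact det_eq_det_submatrix_or_eq_neg _ _ _

end Matrix

theorem tau2_two_mul (k : ℕ) : tau2 (2 * k) = tau2 k := by
  rcases k.eq_zero_or_pos with rfl | hk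
  · rfl
  · rw [tau2, Nat.digits_def' one_lt_two (by omega)]
    simp [tau2]

theorem tau2_two_mul_add_one (k : ℕ) : tau2 (2 * k + 1) = tau2 k + 1 := by
  rw [tau2, Nat.digits_def' one_lt_two (by omega)]
  simp [tau2, Nat.add_mul_div_left, add_comm]

noncomputable def tau2Seq (m : ℕ) : ℚ[X] := X ^ tau2 (m - 1)

theorem tau2Seq_two_mul_add_one (k : ℕ) : tau2Seq (2 * k + 1) = tau2Seq (k + 1) := by
  simp [tau2Seq, tau2_two_mul]

theorem tau2Seq_two_mul_add_two (k : ℕ) : tau2Seq (2 * k + 2) = X * tau2Seq (2 * k + 1) := by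
  simp [tau2Seq, tau2_two_mul, tau2_two_mul_add_one, pow_succ']

theorem hank_eq_hankel (n k : ℕ) : hank n k = Matrix.hankel tau2Seq n k := rfl

theorem hankT_eq_hankel (m k : ℕ) :
    hankT m k = Matrix.hankel (fun t => tau2Seq (t + 1) - X ^ 2 * tau2Seq t) m k := by
  ext i j
  simp [hankT, tau2Seq, add_right_comm _ 1]

/-- If both `n ≥ 2` and `l` are even, then up to sign
`det H(n,l) = u · det H(n/2, l/2) · det H̃(n/2+1, l/2-1)`
(the last matrix having size `l/2`). -/
theorem hankel_det_factorization_even (n l : ℕ) (hn : 2 ≤ n)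
    (hne : Even n) (hle : Even l) :
    (hank n (l + 1)).det =
        X * (hank (n / 2) (l / 2 + 1)).det * (hankT (n / 2 + 1) (l / 2)).det ∨
    (hank n (l + 1)).det =
        -(X * (hank (n / 2) (l / 2 + 1)).det * (hankT (n / 2 + 1) (l / 2)).det) := by
  obtain ⟨m, rfl⟩ : ∃ m, n = 2 * m + 2 := ⟨n / 2 - 1, by rcases hne with ⟨k, rfl⟩; omega⟩
  obtain ⟨s, rfl⟩ := hle
  rw [show (2 * m + 2) / 2 = m + 1 by omega, show (s + s) / 2 = s by omega,
    show s + s + 1 = 2 * s + 1 by ring, hank_eq_hankel, hank_eq_hankel, hankT_eq_hankel]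
  exact Matrix.det_hankel_two_mul_add_two m s tau2Seq_two_mul_add_one tau2Seq_two_mul_add_two
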